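/- arXiv:2603.24497 — 3 statements merged into one kernel-verified Lean document; each statement's English description precedes it below -/
import Mathlib

section
/- (Uniqueness for the extended Maxwell model.) Let N ≥ 1. Suppose G̃₁(t) = ∑_{j=1}^N e^{t α_{1,j}} β_{1,j} and G̃₂(t) = ∑_{j=1}^N e^{t α_{2,j}} β_{2,j}, where within each family the α's are pairwise distinct reals and the β's are nonzero reals. If (d/dt)^k G̃₁(0) = (d/dt)^k G̃₂(0) for all k = 0, 1, ..., 2N-1, then the multisets {(α_{1,j}, β_{1,j})} and {(α_{2,j}, β_{2,j})} coincide, hence G̃₁(t) = G̃₂(t) for all t. -/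
/-!
The `k`-th derivative at `0` of `t ↦ ∑ⱼ e^{t αⱼ} βⱼ` is the `k`-th moment of the discrete measure
`μ = ∑ⱼ βⱼ δ_{αⱼ}` (`atomicWeights α β`). The signed measure `μ₁ - μ₂` lives on at most `2N`
points and its first `2N` moments vanish; integrating the Lagrange basis polynomial of one of its
atoms (of degree less than the number of atoms) against it isolates the mass of that atom, so
`μ₁ = μ₂`. Since the `αⱼ` are distinct and the `βⱼ` nonzero, the pairs `(αⱼ, βⱼ)` form exactly the
graph of `μ`.
-/

open Finset Polynomial

theorem Finsupp.sum_eval_mul_eq_zero {R : Type*} [CommRing R] {w : R →₀ R} {n : ℕ}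
    (h : ∀ k < n, w.sum (fun x c => x ^ k * c) = 0) {p : R[X]} (hp : p.natDegree < n) :
    w.sum (fun x c => p.eval x * c) = 0 := by
  simp_rw [eval_eq_sum_range' hp, Finset.sum_mul, mul_assoc]
  rw [Finsupp.sum, Finset.sum_comm]
  refine Finset.sum_eq_zero fun k hk => ?_
  rw [← Finset.mul_sum, ← Finsupp.sum, h k (mem_range.1 hk), mul_zero]

theorem Finsupp.eq_zero_of_sum_pow_mul_eq_zero {K : Type*} [Field K] {w : K →₀ K}
    (h : ∀ k < #w.support, w.sum (fun x c => x ^ k * c) = 0) : w = 0 := by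
  classical
  by_contra hw
  obtain ⟨x₀, hx₀⟩ := Finsupp.support_nonempty_iff.2 hw
  have hdeg : (Lagrange.basis w.support id x₀).natDegree < #w.support := by
    rw [Lagrange.natDegree_basis (Set.injOn_id _) hx₀]
    exact Nat.sub_lt (card_pos.2 ⟨x₀, hx₀⟩) one_pos
  have hsum := Finsupp.sum_eval_mul_eq_zero h hdeg
  have hbasis_ne : ∀ x ∈ w.support, x ≠ x₀ → (Lagrange.basis w.support id x₀).eval x = 0 :=
    fun x hx hne => Lagrange.eval_basis_of_ne (v := id) hne.symm hx
  have hbasis_self : (Lagrange.basis w.support id x₀).eval x₀ = 1 :=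
    Lagrange.eval_basis_self (Set.injOn_id _) hx₀
  rw [Finsupp.sum, Finset.sum_eq_single_of_mem x₀ hx₀ fun x hx hne => by
    rw [hbasis_ne x hx hne, zero_mul], hbasis_self, one_mul] at hsum
  exact Finsupp.mem_support_iff.1 hx₀ hsum

lemma iteratedDeriv_sum_exp_mul_mul_zero {ι : Type*} [Fintype ι] (α β : ι → ℝ) (k : ℕ) :
    iteratedDeriv k (fun t : ℝ => ∑ j, Real.exp (t * α j) * β j) 0 = ∑ j, α j ^ k * β j := by
  simp_rw [mul_comm _ (α _)]
  rw [iteratedDeriv_fun_sum fun j _ => by fun_prop]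
  simp [iteratedDeriv_mul_const_field]

section atomicWeights

variable {ι K : Type*} [Fintype ι] [Semiring K]

noncomputable def atomicWeights (α β : ι → K) : K →₀ K :=
  (Finsupp.equivFunOnFinite.symm β).mapDomain α

lemma atomicWeights_sum_mul (α β : ι → K) (g : K → K) :
    (atomicWeights α β).sum (fun x c => g x * c) = ∑ j, g (α j) * β j := by
  rw [atomicWeights, Finsupp.sum_mapDomain_index (fun _ => mul_zero _) (fun _ _ _ => mul_add _ _ _),
    Finsupp.sum_fintype _ _ fun _ => mul_zero _]
  rfl

lemma card_support_atomicWeights_le (α β : ι → K) :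
    #(atomicWeights α β).support ≤ Fintype.card ι := by
  classical
  exact (card_le_card Finsupp.mapDomain_support).trans (card_image_le.trans (card_le_univ _))

lemma map_eq_graph_atomicWeights {α β : ι → K} (hα : Function.Injective α) (hβ : ∀ j, β j ≠ 0) :
    univ.val.map (fun j => (α j, β j)) = (atomicWeights α β).graph.val := by
  have hα_apply : ∀ j, atomicWeights α β (α j) = β j := fun j =>
    Finsupp.mapDomain_apply hα _ j
  refine (Multiset.Nodup.ext ((univ.nodup).map fun i j hij => hα (congrArg Prod.fst hij))
    (Finset.nodup _)).2 fun ⟨x, c⟩ => ?_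
  rw [Finset.mem_val, Finsupp.mk_mem_graph_iff, Multiset.mem_map]
  constructor
  · rintro ⟨j, -, hj⟩
    obtain ⟨rfl, rfl⟩ := Prod.mk.inj hj
    exact ⟨hα_apply j, hβ j⟩
  · rintro ⟨hx, hc⟩
    obtain ⟨j, rfl⟩ : x ∈ Set.range α := by
      by_contra hx'
      exact hc (hx ▸ Finsupp.mapDomain_of_notMem_range _ x hx')
    exact ⟨j, mem_univ _, by rw [← hx, hα_apply]⟩

end atomicWeights

theorem stmt_5_general (N : ℕ) (α₁ β₁ α₂ β₂ : Fin N → ℝ)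
    (hα₁ : Function.Injective α₁) (hα₂ : Function.Injective α₂)
    (hβ₁ : ∀ j, β₁ j ≠ 0) (hβ₂ : ∀ j, β₂ j ≠ 0)
    (h : ∀ k : ℕ, k < 2 * N →
      iteratedDeriv k (fun t : ℝ => ∑ j, Real.exp (t * α₁ j) * β₁ j) 0 =
        iteratedDeriv k (fun t : ℝ => ∑ j, Real.exp (t * α₂ j) * β₂ j) 0) :
    (Finset.univ.val.map fun j => (α₁ j, β₁ j)) =
        (Finset.univ.val.map fun j => (α₂ j, β₂ j)) ∧
      ∀ t : ℝ, ∑ j, Real.exp (t * α₁ j) * β₁ j = ∑ j, Real.exp (t * α₂ j) * β₂ j := by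
  classical
  set w := atomicWeights α₁ β₁ - atomicWeights α₂ β₂
  have hcard : #w.support ≤ 2 * N := calc
    #w.support ≤ #(atomicWeights α₁ β₁).support + #(atomicWeights α₂ β₂).support :=
      (card_le_card Finsupp.support_sub).trans (card_union_le _ _)
    _ ≤ 2 * N := by
      have h₁ := card_support_atomicWeights_le α₁ β₁
      have h₂ := card_support_atomicWeights_le α₂ β₂
      simp only [Fintype.card_fin] at h₁ h₂
      omega
  have hw : w = 0 := Finsupp.eq_zero_of_sum_pow_mul_eq_zero fun k hk => by
    rw [Finsupp.sum_sub_index fun _ _ _ => mul_sub _ _ _, atomicWeights_sum_mul,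
      atomicWeights_sum_mul, ← iteratedDeriv_sum_exp_mul_mul_zero,
      ← iteratedDeriv_sum_exp_mul_mul_zero, h k (hk.trans_le hcard), sub_self]
  rw [sub_eq_zero] at hw
  refine ⟨by rw [map_eq_graph_atomicWeights hα₁ hβ₁, map_eq_graph_atomicWeights hα₂ hβ₂, hw],
    fun t => ?_⟩
  simpa only [atomicWeights_sum_mul] using congrArg (·.sum fun x c => Real.exp (t * x) * c) hw

theorem stmt_5 (N : ℕ) (hN : 1 ≤ N) (α₁ β₁ α₂ β₂ : Fin N → ℝ)
    (hα₁ : Function.Injective α₁) (hα₂ : Function.Injective α₂)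
    (hβ₁ : ∀ j, β₁ j ≠ 0) (hβ₂ : ∀ j, β₂ j ≠ 0)
    (h : ∀ k : ℕ, k < 2 * N →
      iteratedDeriv k (fun t : ℝ => ∑ j, Real.exp (t * α₁ j) * β₁ j) 0 =
        iteratedDeriv k (fun t : ℝ => ∑ j, Real.exp (t * α₂ j) * β₂ j) 0) :
    (Finset.univ.val.map fun j => (α₁ j, β₁ j)) =
        (Finset.univ.val.map fun j => (α₂ j, β₂ j)) ∧
      ∀ t : ℝ, ∑ j, Real.exp (t * α₁ j) * β₁ j = ∑ j, Real.exp (t * α₂ j) * β₂ j :=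
  stmt_5_general N α₁ β₁ α₂ β₂ hα₁ hα₂ hβ₁ hβ₂ h
end

section
/- Let α₁,...,α_N, β₁,...,β_N and α'₁,...,α'_N, β'₁,...,β'_N be real numbers with each family of α's pairwise distinct. If ∑_{j=1}^N α_j^k β_j = ∑_{j=1}^N (α'_j)^k β'_j for k = 0,...,2N-1 and all β_j, β'_j are nonzero, then the monic polynomials ∏_{ν=1}^N (y - α_ν) and ∏_{ν=1}^N (y - α'_ν) are equal. -/
open Finset Polynomial

lemma vand_zero {N : ℕ} (v c : Fin N → ℝ) (hv : Function.Injective v)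
    (h : ∀ l, l < N → ∑ j, c j * v j ^ l = 0) : ∀ i, c i = 0 := by
  intro i
  set L : ℝ[X] := ∏ j ∈ univ.erase i, (X - C (v j)) with hL
  have hdeg : L.natDegree < N := by
    rw [hL, natDegree_prod _ _ (fun j _ => X_sub_C_ne_zero _)]
    simp only [natDegree_X_sub_C, Finset.sum_const, smul_eq_mul, mul_one]
    rw [card_erase_of_mem (mem_univ i), card_univ, Fintype.card_fin]
    have := i.pos
    omega
  have key : ∑ j, c j * L.eval (v j) = 0 := by
    have he : ∀ j, L.eval (v j) = ∑ k ∈ range N, L.coeff k * v j ^ k := fun j =>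
      eval_eq_sum_range' hdeg _
    simp_rw [he, Finset.mul_sum]
    rw [Finset.sum_comm]
    apply Finset.sum_eq_zero
    intro k hk
    calc ∑ j, c j * (L.coeff k * v j ^ k)
        = L.coeff k * ∑ j, c j * v j ^ k := by
          rw [Finset.mul_sum]; apply Finset.sum_congr rfl; intro j _; ring
      _ = 0 := by rw [h k (mem_range.mp hk), mul_zero]
  have hzero : ∀ j, j ≠ i → L.eval (v j) = 0 := by
    intro j hj
    rw [hL, eval_prod]
    apply Finset.prod_eq_zero (mem_erase.mpr ⟨hj, mem_univ j⟩)
    simp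
  have hLi : L.eval (v i) ≠ 0 := by
    rw [hL, eval_prod]
    apply Finset.prod_ne_zero_iff.mpr
    intro j hj
    simp only [eval_sub, eval_X, eval_C, sub_ne_zero]
    exact fun hvij => (mem_erase.mp hj).1 (hv hvij.symm)
  have hsum : ∑ j, c j * L.eval (v j) = c i * L.eval (v i) := by
    apply Finset.sum_eq_single i
    · intro j _ hj; rw [hzero j hj, mul_zero]
    · intro hi; exact absurd (mem_univ i) hi
  rw [hsum] at key
  exact (mul_eq_zero.mp key).resolve_right hLi

theorem stmt_6 (N : ℕ) (α β α' β' : Fin N → ℝ)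
    (hα : Function.Injective α) (hα' : Function.Injective α')
    (hβ : ∀ j, β j ≠ 0) (hβ' : ∀ j, β' j ≠ 0)
    (h : ∀ k : ℕ, k < 2 * N → ∑ j, α j ^ k * β j = ∑ j, α' j ^ k * β' j) :
    (∏ ν, (Polynomial.X - Polynomial.C (α ν))) =
      ∏ ν, (Polynomial.X - Polynomial.C (α' ν)) := by
  set P : ℝ[X] := ∏ ν, (X - C (α ν)) with hP
  have hPm : P.Monic := monic_prod_of_monic _ _ fun ν _ => monic_X_sub_C _
  have hdegP : P.natDegree = N := by
    rw [hP, natDegree_prod _ _ (fun j _ => X_sub_C_ne_zero _)]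
    simp only [natDegree_X_sub_C, Finset.sum_const, smul_eq_mul, mul_one,
      card_univ, Fintype.card_fin]
  have hrootα : ∀ j, P.eval (α j) = 0 := by
    intro j
    rw [hP, eval_prod]
    apply Finset.prod_eq_zero (mem_univ j)
    simp
  have key : ∀ l, l < N → ∑ j, (β' j * P.eval (α' j)) * α' j ^ l = 0 := by
    intro l hl
    have he : ∀ (x : ℝ), P.eval x = ∑ k ∈ range (N + 1), P.coeff k * x ^ k := by
      intro x
      rw [eval_eq_sum_range, hdegP]
    have step : ∀ (v b : Fin N → ℝ),
        ∑ j, (b j * P.eval (v j)) * v j ^ l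
          = ∑ k ∈ range (N + 1), P.coeff k * ∑ j, v j ^ (k + l) * b j := by
      intro v b
      have h1 : ∀ j : Fin N, (b j * P.eval (v j)) * v j ^ l
          = ∑ k ∈ range (N + 1), P.coeff k * (v j ^ (k + l) * b j) := by
        intro j
        rw [he, Finset.mul_sum, Finset.sum_mul]
        apply Finset.sum_congr rfl
        intro k _
        rw [pow_add]; ring
      rw [Finset.sum_congr rfl (fun j _ => h1 j), Finset.sum_comm]
      apply Finset.sum_congr rfl
      intro k _
      rw [Finset.mul_sum]
    rw [step α' β']
    have hmom : ∀ k ∈ range (N + 1),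
        P.coeff k * ∑ j, α' j ^ (k + l) * β' j
          = P.coeff k * ∑ j, α j ^ (k + l) * β j := by
      intro k hk
      rw [← h (k + l) (by have := mem_range.mp hk; omega)]
    rw [Finset.sum_congr rfl hmom, ← step α β]
    apply Finset.sum_eq_zero
    intro j _
    rw [hrootα j]; ring
  have hroot' : ∀ j, P.eval (α' j) = 0 := by
    intro j
    have := vand_zero α' (fun j => β' j * P.eval (α' j)) hα' key j
    exact (mul_eq_zero.mp this).resolve_left (hβ' j)
  have hdvd : (∏ ν, (X - C (α' ν))) ∣ P := by
    apply Finset.prod_dvd_of_coprime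
    · exact (pairwise_coprime_X_sub_C hα').set_pairwise _
    · intro j _
      exact dvd_iff_isRoot.mpr (hroot' j)
  have hQm : (∏ ν, (X - C (α' ν))).Monic :=
    monic_prod_of_monic _ _ fun ν _ => monic_X_sub_C _
  have hdegQ : (∏ ν, (X - C (α' ν))).natDegree = N := by
    rw [natDegree_prod _ _ (fun j _ => X_sub_C_ne_zero _)]
    simp only [natDegree_X_sub_C, Finset.sum_const, smul_eq_mul, mul_one,
      card_univ, Fintype.card_fin]
  symm
  exact eq_of_monic_of_associated hQm hPm
    (associated_of_dvd_of_natDegree_le hdvd hPm.ne_zero (by rw [hdegP, hdegQ]))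
end

section
/- Let H₀ be a complex symmetric n×n matrix with positive definite imaginary part, and let B, C, D : [0,T] → ℂ^{n×n} be continuous with C(σ), D(σ) real symmetric. Suppose H : [0,T] → ℂ^{n×n} is a C¹ solution of the matrix Riccati equation ∂_σ H + D + (B H + H Bᵀ) + H C H = 0 with H(0) = H₀. Then H(σ) is symmetric for all σ ∈ [0,T]. -/
open Matrix

lemma key_identity {n : ℕ} (B C D H : Matrix (Fin n) (Fin n) ℂ)
    (hC : Cᵀ = C) (hD : Dᵀ = D) :
    (-(D + (B * H + H * Bᵀ) + H * C * H)) - (-(D + (B * H + H * Bᵀ) + H * C * H))ᵀ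
      = -((B + H * C) * (H - Hᵀ) + (H - Hᵀ) * (Bᵀ + C * Hᵀ)) := by
  simp only [Matrix.transpose_neg, Matrix.transpose_add, Matrix.transpose_mul,
    Matrix.transpose_transpose, hC, hD]
  noncomm_ring

theorem stmt_18 (n : ℕ) (T : ℝ) (hT : 0 < T)
    (H B C D : ℝ → Matrix (Fin n) (Fin n) ℂ)
    (hBc : ∀ i j, ContinuousOn (fun σ => B σ i j) (Set.Icc 0 T))
    (hCc : ∀ i j, ContinuousOn (fun σ => C σ i j) (Set.Icc 0 T))
    (hDc : ∀ i j, ContinuousOn (fun σ => D σ i j) (Set.Icc 0 T))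
    (hCsym : ∀ σ ∈ Set.Icc (0 : ℝ) T, (C σ)ᵀ = C σ ∧ ∀ i j, (C σ i j).im = 0)
    (hDsym : ∀ σ ∈ Set.Icc (0 : ℝ) T, (D σ)ᵀ = D σ ∧ ∀ i j, (D σ i j).im = 0)
    (hH0sym : (H 0)ᵀ = H 0)
    (hH0pos : (Matrix.of fun i j => (H 0 i j).im).PosDef)
    (hODE : ∀ σ ∈ Set.Icc (0 : ℝ) T, ∀ i j, HasDerivAt (fun σ => H σ i j)
        ((-(D σ + (B σ * H σ + H σ * (B σ)ᵀ) + H σ * C σ * H σ)) i j) σ) :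
    ∀ σ ∈ Set.Icc (0 : ℝ) T, (H σ)ᵀ = H σ := by
  have h0T : (0:ℝ) ∈ Set.Icc (0:ℝ) T := ⟨le_refl _, hT.le⟩
  -- entrywise continuity of H
  have hHc : ∀ i j, ContinuousOn (fun σ => H σ i j) (Set.Icc 0 T) := fun i j σ hσ =>
    (hODE σ hσ i j).continuousAt.continuousWithinAt
  -- the difference function, viewed as a pi-type valued map
  set F : ℝ → (Fin n → Fin n → ℂ) := fun σ i j => H σ i j - H σ j i with hFdef
  set F' : ℝ → (Fin n → Fin n → ℂ) :=
    fun σ i j => (-((B σ + H σ * C σ) * (H σ - (H σ)ᵀ)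
      + (H σ - (H σ)ᵀ) * ((B σ)ᵀ + C σ * (H σ)ᵀ))) i j with hF'def
  -- F' is the derivative of F on Icc
  have hderiv : ∀ σ ∈ Set.Icc (0:ℝ) T, HasDerivAt F (F' σ) σ := by
    intro σ hσ
    rw [hasDerivAt_pi]
    intro i
    rw [hasDerivAt_pi]
    intro j
    have h1 : HasDerivAt (fun σ => F σ i j)
        ((-(D σ + (B σ * H σ + H σ * (B σ)ᵀ) + H σ * C σ * H σ)) i j
          - (-(D σ + (B σ * H σ + H σ * (B σ)ᵀ) + H σ * C σ * H σ)) j i) σ :=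
      (hODE σ hσ i j).sub (hODE σ hσ j i)
    have hid := key_identity (B σ) (C σ) (D σ) (H σ) (hCsym σ hσ).1 (hDsym σ hσ).1
    have e2 : F' σ i j
        = (-(D σ + (B σ * H σ + H σ * (B σ)ᵀ) + H σ * C σ * H σ)) i j
          - (-(D σ + (B σ * H σ + H σ * (B σ)ᵀ) + H σ * C σ * H σ)) j i := by
      have := congrFun (congrFun hid i) j
      simp only [Matrix.sub_apply, Matrix.transpose_apply] at this
      rw [hF'def]
      exact this.symm
    rw [e2]
    exact h1
  -- continuity of F
  have hFc : ContinuousOn F (Set.Icc 0 T) :=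
    continuousOn_pi.2 fun i => continuousOn_pi.2 fun j => (hHc i j).sub (hHc j i)
  -- bounds for the coefficient matrices
  have hMc : ContinuousOn (fun σ => (fun i j => (B σ + H σ * C σ) i j :
      Fin n → Fin n → ℂ)) (Set.Icc 0 T) := by
    refine continuousOn_pi.2 fun i => continuousOn_pi.2 fun j => ?_
    simp only [Matrix.add_apply, Matrix.mul_apply]
    exact (hBc i j).add (continuousOn_finset_sum _ fun k _ => (hHc i k).mul (hCc k j))
  have hNc : ContinuousOn (fun σ => (fun i j => ((B σ)ᵀ + C σ * (H σ)ᵀ) i j :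
      Fin n → Fin n → ℂ)) (Set.Icc 0 T) := by
    refine continuousOn_pi.2 fun i => continuousOn_pi.2 fun j => ?_
    simp only [Matrix.add_apply, Matrix.mul_apply, Matrix.transpose_apply]
    exact (hBc j i).add (continuousOn_finset_sum _ fun k _ => (hCc i k).mul (hHc j k))
  obtain ⟨KM, hKM⟩ := isCompact_Icc.exists_bound_of_continuousOn hMc
  obtain ⟨KN, hKN⟩ := isCompact_Icc.exists_bound_of_continuousOn hNc
  have hKM0 : 0 ≤ KM := (norm_nonneg _).trans (hKM 0 h0T)
  have hKN0 : 0 ≤ KN := (norm_nonneg _).trans (hKN 0 h0T)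
  have hMentry : ∀ σ ∈ Set.Icc (0:ℝ) T, ∀ i j, ‖(B σ + H σ * C σ) i j‖ ≤ KM := by
    intro σ hσ i j
    exact (norm_le_pi_norm ((fun i j => (B σ + H σ * C σ) i j : Fin n → Fin n → ℂ) i) j).trans
      ((norm_le_pi_norm (fun i j => (B σ + H σ * C σ) i j : Fin n → Fin n → ℂ) i).trans
        (hKM σ hσ))
  have hNentry : ∀ σ ∈ Set.Icc (0:ℝ) T, ∀ i j, ‖((B σ)ᵀ + C σ * (H σ)ᵀ) i j‖ ≤ KN := by
    intro σ hσ i j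
    exact (norm_le_pi_norm ((fun i j => ((B σ)ᵀ + C σ * (H σ)ᵀ) i j : Fin n → Fin n → ℂ) i) j).trans
      ((norm_le_pi_norm (fun i j => ((B σ)ᵀ + C σ * (H σ)ᵀ) i j : Fin n → Fin n → ℂ) i).trans
        (hKN σ hσ))
  have hFentry : ∀ σ, ∀ i j, ‖F σ i j‖ ≤ ‖F σ‖ := by
    intro σ i j
    exact (norm_le_pi_norm (F σ i) j).trans (norm_le_pi_norm (F σ) i)
  set K : ℝ := n * KM + n * KN with hKdef
  have hK0 : 0 ≤ K := by positivity
  -- the Gronwall bound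
  have hbound : ∀ σ ∈ Set.Ico (0:ℝ) T, ‖F' σ‖ ≤ K * ‖F σ‖ + 0 := by
    intro σ hσ'
    have hσ : σ ∈ Set.Icc (0:ℝ) T := Set.Ico_subset_Icc_self hσ'
    rw [add_zero]
    have hnn : 0 ≤ K * ‖F σ‖ := mul_nonneg hK0 (norm_nonneg _)
    refine (pi_norm_le_iff_of_nonneg hnn).2 fun i => (pi_norm_le_iff_of_nonneg hnn).2 fun j => ?_
    have hE : H σ - (H σ)ᵀ = Matrix.of (F σ) := by
      ext i j
      simp [hFdef, Matrix.sub_apply]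
    have e3 : F' σ i j = -(((B σ + H σ * C σ) * (H σ - (H σ)ᵀ)) i j
        + ((H σ - (H σ)ᵀ) * ((B σ)ᵀ + C σ * (H σ)ᵀ)) i j) := by
      simp [hF'def, Matrix.add_apply, Matrix.neg_apply]
    rw [e3, norm_neg]
    have b1 : ‖((B σ + H σ * C σ) * (H σ - (H σ)ᵀ)) i j‖ ≤ (n : ℝ) * (KM * ‖F σ‖) := by
      rw [Matrix.mul_apply]
      calc ‖∑ k, (B σ + H σ * C σ) i k * (H σ - (H σ)ᵀ) k j‖
          ≤ ∑ k, ‖(B σ + H σ * C σ) i k * (H σ - (H σ)ᵀ) k j‖ := norm_sum_le _ _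
        _ ≤ ∑ _k : Fin n, KM * ‖F σ‖ := by
            refine Finset.sum_le_sum fun k _ => ?_
            rw [norm_mul]
            have h1 := hMentry σ hσ i k
            have h2 : ‖(H σ - (H σ)ᵀ) k j‖ ≤ ‖F σ‖ := by
              have : (H σ - (H σ)ᵀ) k j = F σ k j := by
                simp [hFdef, Matrix.sub_apply]
              rw [this]; exact hFentry σ k j
            exact mul_le_mul h1 h2 (norm_nonneg _) hKM0
        _ = (n : ℝ) * (KM * ‖F σ‖) := by
            rw [Finset.sum_const, Finset.card_univ, Fintype.card_fin, nsmul_eq_mul]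
    have b2 : ‖((H σ - (H σ)ᵀ) * ((B σ)ᵀ + C σ * (H σ)ᵀ)) i j‖ ≤ (n : ℝ) * (KN * ‖F σ‖) := by
      rw [Matrix.mul_apply]
      calc ‖∑ k, (H σ - (H σ)ᵀ) i k * ((B σ)ᵀ + C σ * (H σ)ᵀ) k j‖
          ≤ ∑ k, ‖(H σ - (H σ)ᵀ) i k * ((B σ)ᵀ + C σ * (H σ)ᵀ) k j‖ := norm_sum_le _ _
        _ ≤ ∑ _k : Fin n, ‖F σ‖ * KN := by
            refine Finset.sum_le_sum fun k _ => ?_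
            rw [norm_mul]
            have h1 : ‖(H σ - (H σ)ᵀ) i k‖ ≤ ‖F σ‖ := by
              have : (H σ - (H σ)ᵀ) i k = F σ i k := by
                simp [hFdef, Matrix.sub_apply]
              rw [this]; exact hFentry σ i k
            exact mul_le_mul h1 (hNentry σ hσ k j) (norm_nonneg _) (norm_nonneg _)
        _ = (n : ℝ) * (KN * ‖F σ‖) := by
            rw [Finset.sum_const, Finset.card_univ, Fintype.card_fin, nsmul_eq_mul]; ring
    calc ‖((B σ + H σ * C σ) * (H σ - (H σ)ᵀ)) i j
          + ((H σ - (H σ)ᵀ) * ((B σ)ᵀ + C σ * (H σ)ᵀ)) i j‖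
        ≤ ‖((B σ + H σ * C σ) * (H σ - (H σ)ᵀ)) i j‖
          + ‖((H σ - (H σ)ᵀ) * ((B σ)ᵀ + C σ * (H σ)ᵀ)) i j‖ := norm_add_le _ _
      _ ≤ (n : ℝ) * (KM * ‖F σ‖) + (n : ℝ) * (KN * ‖F σ‖) := add_le_add b1 b2
      _ = K * ‖F σ‖ := by rw [hKdef]; ring
  have hF0 : ‖F 0‖ ≤ 0 := by
    have : F 0 = 0 := by
      funext i j
      have := congrFun (congrFun hH0sym i) j
      simp only [Matrix.transpose_apply] at this
      simp [hFdef, this]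
    simp [this]
  have hgron := norm_le_gronwallBound_of_norm_deriv_right_le hFc
    (fun t ht => (hderiv t (Set.Ico_subset_Icc_self ht)).hasDerivWithinAt) hF0 hbound
  intro σ hσ
  have hzero : ‖F σ‖ ≤ 0 := by
    have := hgron σ hσ
    rwa [gronwallBound_ε0_δ0] at this
  have hFz : F σ = 0 := norm_le_zero_iff.1 hzero
  ext i j
  have := congrFun (congrFun hFz j) i
  simp only [Pi.zero_apply] at this
  have h := sub_eq_zero.1 this
  simp [Matrix.transpose_apply, h]
end
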